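/- Let (g_t)_{t∈[0,1]} and (h_t)_{t∈[0,1]} be smooth isotopies in G_o with g_0 = h_0 = id. Then the pointwise composition (g_t ∘ h_t)_{t∈[0,1]} is a smooth isotopy in G_o starting at the identity, and S((g_t ∘ h_t)) = S((g_t)) + S((h_t)); that is, S is a group homomorphism. -/

import Mathlib

open MeasureTheory Filter Topology Set Function Real

noncomputable section

/-- The closed unit disk in `ℝ²`. -/
def disk : Set (ℝ × ℝ) := {p | p.1 ^ 2 + p.2 ^ 2 ≤ 1}

/-- The boundary circle of the unit disk. -/
def bdry : Set (ℝ × ℝ) := {p | p.1 ^ 2 + p.2 ^ 2 = 1}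

/-- Partial derivative in the `x`-direction. -/
def pdx (f : ℝ × ℝ → ℝ) (p : ℝ × ℝ) : ℝ := fderiv ℝ f p (1, 0)

/-- Partial derivative in the `y`-direction. -/
def pdy (f : ℝ × ℝ → ℝ) (p : ℝ × ℝ) : ℝ := fderiv ℝ f p (0, 1)

/-- The Jacobian determinant of a map `ℝ² → ℝ²`. -/
def jacDet (g : ℝ × ℝ → ℝ × ℝ) (p : ℝ × ℝ) : ℝ :=
  pdx (fun q => (g q).1) p * pdy (fun q => (g q).2) p -
    pdy (fun q => (g q).1) p * pdx (fun q => (g q).2) p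

/-- `g` represents an element of `Symp(D)`: a `C^∞` diffeomorphism of the closed
unit disk onto itself (smooth up to the boundary, i.e. the restriction of a
globally smooth map with globally smooth inverse on the disk) whose Jacobian
determinant is identically `1` on the disk. -/
def IsSymp (g : ℝ × ℝ → ℝ × ℝ) : Prop :=
  ContDiff ℝ (⊤ : ℕ∞) g ∧ MapsTo g disk disk ∧ (∀ p ∈ disk, jacDet g p = 1) ∧
    ∃ g' : ℝ × ℝ → ℝ × ℝ, ContDiff ℝ (⊤ : ℕ∞) g' ∧ MapsTo g' disk disk ∧
      (∀ p ∈ disk, g' (g p) = p) ∧ (∀ p ∈ disk, g (g' p) = p)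

/-- `g` represents an element of `G_o`: a symplectomorphism of the disk fixing the origin. -/
def IsSympO (g : ℝ × ℝ → ℝ × ℝ) : Prop :=
  IsSymp g ∧ g (0, 0) = (0, 0)

/-- `τ_λ(g) = ∫_D g*λ ∧ λ` for `λ = (x dy - y dx)/2`, written out in coordinates. -/
def tauL (g : ℝ × ℝ → ℝ × ℝ) : ℝ :=
  (1 / 4) * ∫ p in disk,
    (p.1 * ((g p).1 * pdx (fun q => (g q).2) p - (g p).2 * pdx (fun q => (g q).1) p) +
     p.2 * ((g p).1 * pdy (fun q => (g q).2) p - (g p).2 * pdy (fun q => (g q).1) p))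

/-- `σ(g) = ∫_γ (g*λ - λ)` along the radial path `γ(t) = (t,0)`, in coordinates. -/
def sigmaQ (g : ℝ × ℝ → ℝ × ℝ) : ℝ :=
  (1 / 2) * ∫ t in (0:ℝ)..1,
    ((g (t, 0)).1 * pdx (fun q => (g q).2) (t, 0) -
      (g (t, 0)).2 * pdx (fun q => (g q).1) (t, 0))

/-- `G` is a smooth isotopy in `Symp(D)` starting at the identity. -/
def IsIsotopy (G : ℝ → ℝ × ℝ → ℝ × ℝ) : Prop :=
  ContDiff ℝ (⊤ : ℕ∞) (fun q : ℝ × (ℝ × ℝ) => G q.1 q.2) ∧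
    (∀ t ∈ Icc (0:ℝ) 1, IsSymp (G t)) ∧ (∀ p ∈ disk, G 0 p = p)

/-- `f` is a family of Hamiltonian functions for the isotopy `G`, i.e.
`i_{X_t} ω = d f_t` where `X_t = (∂g_t/∂t) ∘ g_t⁻¹`; since `g_t` maps the disk
onto itself this is expressed at the points `G t p`, `p ∈ D`. -/
def IsHam (G : ℝ → ℝ × ℝ → ℝ × ℝ) (f : ℝ → ℝ × ℝ → ℝ) : Prop :=
  ContDiff ℝ (⊤ : ℕ∞) (fun q : ℝ × (ℝ × ℝ) => f q.1 q.2) ∧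
    ∀ t ∈ Icc (0:ℝ) 1, ∀ p ∈ disk,
      pdx (f t) (G t p) = -(deriv (fun s => G s p) t).2 ∧
      pdy (f t) (G t p) = (deriv (fun s => G s p) t).1

/-- `φ` is the lift of the boundary isotopy of `G`, with `φ 0 = id`. -/
def IsBoundaryLift (G : ℝ → ℝ × ℝ → ℝ × ℝ) (φ : ℝ → ℝ → ℝ) : Prop :=
  ContDiff ℝ (⊤ : ℕ∞) (fun q : ℝ × ℝ => φ q.1 q.2) ∧
    (∀ t ∈ Icc (0:ℝ) 1, StrictMono (φ t) ∧ ∀ θ : ℝ, φ t (θ + 2 * π) = φ t θ + 2 * π) ∧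
    (∀ θ : ℝ, φ 0 θ = θ) ∧
    (∀ t ∈ Icc (0:ℝ) 1, ∀ θ : ℝ,
      G t (Real.cos θ, Real.sin θ) = (Real.cos (φ t θ), Real.sin (φ t θ)))

-- basic lemmas test
lemma basis_decomp (v : ℝ × ℝ) : v = v.1 • ((1:ℝ),(0:ℝ)) + v.2 • ((0:ℝ),(1:ℝ)) := by
  simp [Prod.ext_iff]

lemma clm_apply_scalar (L : ℝ × ℝ →L[ℝ] ℝ) (v : ℝ × ℝ) :
    L v = v.1 * L (1,0) + v.2 * L (0,1) := by
  conv_lhs => rw [basis_decomp v]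
  rw [map_add, L.map_smul, L.map_smul]
  simp

lemma clm_apply_vec (L : ℝ × ℝ →L[ℝ] ℝ × ℝ) (v : ℝ × ℝ) :
    L v = v.1 • L (1,0) + v.2 • L (0,1) := by
  conv_lhs => rw [basis_decomp v]
  rw [map_add, L.map_smul, L.map_smul]

lemma det2_mul (M : ℝ × ℝ →L[ℝ] ℝ × ℝ) (a b : ℝ × ℝ) :
    (M a).1 * (M b).2 - (M a).2 * (M b).1 =
      (a.1 * b.2 - a.2 * b.1) *
        ((M (1,0)).1 * (M (0,1)).2 - (M (1,0)).2 * (M (0,1)).1) := by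
  rw [clm_apply_vec M a, clm_apply_vec M b]
  simp [Prod.smul_fst, Prod.smul_snd, smul_eq_mul]
  ring

lemma convex_disk : Convex ℝ disk := by
  intro p hp q hq a b ha hb hab
  simp only [disk, mem_setOf_eq, Prod.fst_add, Prod.snd_add, Prod.smul_fst, Prod.smul_snd,
    smul_eq_mul] at *
  nlinarith [mul_nonneg (mul_nonneg ha ha) (sub_nonneg.mpr hp),
    mul_nonneg (mul_nonneg hb hb) (sub_nonneg.mpr hq),
    mul_nonneg (mul_nonneg ha hb) (add_nonneg (sq_nonneg (p.1 - q.1)) (sq_nonneg (p.2 - q.2))),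
    mul_nonneg (mul_nonneg ha hb) (sub_nonneg.mpr hp),
    mul_nonneg (mul_nonneg ha hb) (sub_nonneg.mpr hq)]

lemma zero_mem_disk : ((0:ℝ),(0:ℝ)) ∈ disk := by simp [disk]

lemma bdry_subset_disk : bdry ⊆ disk := fun p hp => le_of_eq hp

lemma exists_angle {x y : ℝ} (h : x^2 + y^2 = 1) :
    ∃ θ : ℝ, Real.cos θ = x ∧ Real.sin θ = y := by
  have hx1 : -1 ≤ x := by nlinarith
  have hx2 : x ≤ 1 := by nlinarith
  have hs : Real.sin (Real.arccos x) = Real.sqrt (1 - x^2) := Real.sin_arccos x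
  have hy2 : Real.sqrt (1 - x^2) = |y| := by
    rw [show 1 - x^2 = y^2 by nlinarith, Real.sqrt_sq_eq_abs]
  rcases le_or_gt 0 y with hy | hy
  · exact ⟨Real.arccos x, Real.cos_arccos hx1 hx2, by rw [hs, hy2, abs_of_nonneg hy]⟩
  · refine ⟨-Real.arccos x, by rw [Real.cos_neg]; exact Real.cos_arccos hx1 hx2, ?_⟩
    rw [Real.sin_neg, hs, hy2, abs_of_neg hy, neg_neg]

lemma pdx_fst {g : ℝ × ℝ → ℝ × ℝ} {p : ℝ × ℝ} (hg : DifferentiableAt ℝ g p) :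
    pdx (fun q => (g q).1) p = (fderiv ℝ g p (1,0)).1 := by
  have h : HasFDerivAt (fun q => (g q).1)
      ((ContinuousLinearMap.fst ℝ ℝ ℝ).comp (fderiv ℝ g p)) p := hg.hasFDerivAt.fst
  rw [pdx, h.fderiv]; rfl

lemma pdx_snd {g : ℝ × ℝ → ℝ × ℝ} {p : ℝ × ℝ} (hg : DifferentiableAt ℝ g p) :
    pdx (fun q => (g q).2) p = (fderiv ℝ g p (1,0)).2 := by
  have h : HasFDerivAt (fun q => (g q).2)
      ((ContinuousLinearMap.snd ℝ ℝ ℝ).comp (fderiv ℝ g p)) p := hg.hasFDerivAt.snd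
  rw [pdx, h.fderiv]; rfl

lemma pdy_fst {g : ℝ × ℝ → ℝ × ℝ} {p : ℝ × ℝ} (hg : DifferentiableAt ℝ g p) :
    pdy (fun q => (g q).1) p = (fderiv ℝ g p (0,1)).1 := by
  have h : HasFDerivAt (fun q => (g q).1)
      ((ContinuousLinearMap.fst ℝ ℝ ℝ).comp (fderiv ℝ g p)) p := hg.hasFDerivAt.fst
  rw [pdy, h.fderiv]; rfl

lemma pdy_snd {g : ℝ × ℝ → ℝ × ℝ} {p : ℝ × ℝ} (hg : DifferentiableAt ℝ g p) :
    pdy (fun q => (g q).2) p = (fderiv ℝ g p (0,1)).2 := by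
  have h : HasFDerivAt (fun q => (g q).2)
      ((ContinuousLinearMap.snd ℝ ℝ ℝ).comp (fderiv ℝ g p)) p := hg.hasFDerivAt.snd
  rw [pdy, h.fderiv]; rfl

lemma jacDet_eq {g : ℝ × ℝ → ℝ × ℝ} {p : ℝ × ℝ} (hg : DifferentiableAt ℝ g p) :
    jacDet g p = (fderiv ℝ g p (1,0)).1 * (fderiv ℝ g p (0,1)).2 -
      (fderiv ℝ g p (0,1)).1 * (fderiv ℝ g p (1,0)).2 := by
  rw [jacDet, pdx_fst hg, pdx_snd hg, pdy_fst hg, pdy_snd hg]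

-- scalar fderiv through pdx/pdy
lemma scalar_apply {φ : ℝ × ℝ → ℝ} {p : ℝ × ℝ} (v : ℝ × ℝ) :
    fderiv ℝ φ p v = v.1 * pdx φ p + v.2 * pdy φ p := clm_apply_scalar _ v

lemma hasDerivAt_slice {F : ℝ × (ℝ × ℝ) → ℝ × ℝ} (hF : ContDiff ℝ (⊤ : ℕ∞) F)
    {γ : ℝ → ℝ × ℝ} {γ' : ℝ × ℝ} {t : ℝ} (hγ : HasDerivAt γ γ' t) :
    HasDerivAt (fun s => F (s, γ s)) (fderiv ℝ F (t, γ t) (1, γ')) t := by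
  have h1 : HasDerivAt (fun s => (s, γ s)) ((1:ℝ), γ') t := (hasDerivAt_id t).prodMk hγ
  exact ((hF.differentiable (by simp) (t, γ t)).hasFDerivAt).comp_hasDerivAt t h1

lemma fderiv_slice {F : ℝ × (ℝ × ℝ) → ℝ × ℝ} (hF : ContDiff ℝ (⊤ : ℕ∞) F)
    (t : ℝ) (p : ℝ × ℝ) (v : ℝ × ℝ) :
    fderiv ℝ (fun q => F (t, q)) p v = fderiv ℝ F (t, p) (0, v) := by
  have h1 : HasFDerivAt (fun q : ℝ × ℝ => ((t, q) : ℝ × (ℝ × ℝ)))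
      ((0 : (ℝ × ℝ) →L[ℝ] ℝ).prod (ContinuousLinearMap.id ℝ (ℝ × ℝ))) p :=
    (hasFDerivAt_const t p).prodMk (hasFDerivAt_id p)
  have h2 : HasFDerivAt (fun q => F (t, q))
      ((fderiv ℝ F (t, p)).comp ((0 : (ℝ × ℝ) →L[ℝ] ℝ).prod (ContinuousLinearMap.id ℝ (ℝ × ℝ)))) p :=
    ((hF.differentiable (by simp) (t, p)).hasFDerivAt).comp p h1
  rw [h2.fderiv]
  simp [ContinuousLinearMap.prod_apply]

lemma disk_not_mem_nhds {p : ℝ × ℝ} (hp : p ∈ bdry) : disk ∉ 𝓝 p := by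
  intro h
  have hlim : Tendsto (fun ε : ℝ => ((1+ε) • p : ℝ × ℝ)) (𝓝[>] 0) (𝓝 p) := by
    have hc : Continuous (fun ε : ℝ => ((1+ε) • p : ℝ × ℝ)) := by continuity
    have := hc.tendsto 0
    simp only [add_zero, one_smul] at this
    exact this.mono_left nhdsWithin_le_nhds
  have h1 : ∀ᶠ ε in 𝓝[>] (0:ℝ), ((1+ε) • p : ℝ × ℝ) ∈ disk := hlim.eventually_mem h
  have h2 : ∀ᶠ ε in 𝓝[>] (0:ℝ), (0:ℝ) < ε := eventually_mem_nhdsWithin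
  obtain ⟨ε, hεd, hεp⟩ := (h1.and h2).exists
  have hb : p.1 ^ 2 + p.2 ^ 2 = 1 := hp
  have : ((1+ε) • p : ℝ × ℝ).1 ^ 2 + ((1+ε) • p : ℝ × ℝ).2 ^ 2 ≤ 1 := hεd
  simp only [Prod.smul_fst, Prod.smul_snd, smul_eq_mul] at this
  have expand : ((1+ε)*p.1)^2 + ((1+ε)*p.2)^2 = (1+ε)^2 * (p.1^2+p.2^2) := by ring
  rw [expand, hb, mul_one] at this
  nlinarith [hεp]

lemma mapsTo_bdry {g g' : ℝ × ℝ → ℝ × ℝ} (hg : ContDiff ℝ (⊤ : ℕ∞) g) (hg' : ContDiff ℝ (⊤ : ℕ∞) g')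
    (hmg : MapsTo g disk disk) (hmg' : MapsTo g' disk disk)
    (hl : ∀ p ∈ disk, g' (g p) = p) (hr : ∀ p ∈ disk, g (g' p) = p) :
    ∀ p ∈ bdry, g p ∈ bdry := by
  intro p hp
  by_contra hq
  set q := g p with hqdef
  have hpd : p ∈ disk := bdry_subset_disk hp
  have hqd : q ∈ disk := hmg hpd
  have hqU : q.1 ^ 2 + q.2 ^ 2 < 1 := lt_of_le_of_ne hqd hq
  have hUopen : IsOpen {x : ℝ × ℝ | x.1 ^ 2 + x.2 ^ 2 < 1} := by
    have : Continuous fun x : ℝ × ℝ => x.1 ^ 2 + x.2 ^ 2 := by continuity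
    exact isOpen_lt this continuous_const
  have hUnhds : {x : ℝ × ℝ | x.1 ^ 2 + x.2 ^ 2 < 1} ∈ 𝓝 q := hUopen.mem_nhds hqU
  have hdisknhds : disk ∈ 𝓝 q := mem_of_superset hUnhds (fun x hx => show x.1^2+x.2^2 ≤ 1 from le_of_lt hx)
  -- g ∘ g' = id near q
  have hEq : (fun x => g (g' x)) =ᶠ[𝓝 q] id :=
    Filter.eventuallyEq_of_mem hdisknhds (fun x hx => hr x hx)
  have hdg' : DifferentiableAt ℝ g' q := (hg'.differentiable (by simp)) q
  have hdg : DifferentiableAt ℝ g (g' q) := (hg.differentiable (by simp)) _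
  have hcomp : (fderiv ℝ g (g' q)).comp (fderiv ℝ g' q) = ContinuousLinearMap.id ℝ (ℝ × ℝ) := by
    have h1 : fderiv ℝ (fun x => g (g' x)) q = fderiv ℝ (id : ℝ × ℝ → ℝ × ℝ) q := hEq.fderiv_eq
    rw [fderiv_id] at h1
    rw [← h1]
    exact (fderiv_comp q hdg hdg').symm
  have hinj : Function.Injective (fderiv ℝ g' q) := by
    intro v w hvw
    have := congrArg (fderiv ℝ g (g' q)) hvw
    have h2 : (fderiv ℝ g (g' q)).comp (fderiv ℝ g' q) v =
        (fderiv ℝ g (g' q)).comp (fderiv ℝ g' q) w := this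
    rw [hcomp] at h2
    exact h2
  have hsurj : Function.Surjective (fderiv ℝ g' q : (ℝ × ℝ) →ₗ[ℝ] (ℝ × ℝ)) :=
    LinearMap.injective_iff_surjective.mp hinj
  let e : (ℝ × ℝ) ≃ₗ[ℝ] (ℝ × ℝ) :=
    LinearEquiv.ofBijective ((fderiv ℝ g' q) : (ℝ × ℝ) →ₗ[ℝ] (ℝ × ℝ)) ⟨hinj, hsurj⟩
  let eL : (ℝ × ℝ) ≃L[ℝ] (ℝ × ℝ) := e.toContinuousLinearEquiv
  have hstrict : HasStrictFDerivAt g' (eL : (ℝ × ℝ) →L[ℝ] (ℝ × ℝ)) q := by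
    have hs : HasStrictFDerivAt g' (fderiv ℝ g' q) q :=
      hg'.contDiffAt.hasStrictFDerivAt (by simp)
    have : (eL : (ℝ × ℝ) →L[ℝ] (ℝ × ℝ)) = fderiv ℝ g' q := by
      exact ContinuousLinearMap.ext fun v => rfl
    rw [this]; exact hs
  have hmap : Filter.map g' (𝓝 q) = 𝓝 (g' q) := hstrict.map_nhds_eq_of_equiv
  have hgq : g' q = p := hl p hpd
  have : disk ∈ 𝓝 p := by
    rw [← hgq, ← hmap, Filter.mem_map]
    exact mem_of_superset hdisknhds (fun x hx => hmg' hx)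
  exact disk_not_mem_nhds hp this

lemma ortho_det {x a b : ℝ × ℝ} (hx : x.1^2 + x.2^2 = 1)
    (ha : x.1 * a.1 + x.2 * a.2 = 0) (hb : x.1 * b.1 + x.2 * b.2 = 0) :
    a.1 * b.2 - a.2 * b.1 = 0 := by
  linear_combination (-(a.1 * b.2 - a.2 * b.1)) * hx + (b.2 * x.1 - b.1 * x.2) * ha -
    (a.2 * x.1 - a.1 * x.2) * hb

lemma jacDet_comp {g h : ℝ × ℝ → ℝ × ℝ} {p : ℝ × ℝ}
    (hg : DifferentiableAt ℝ g (h p)) (hh : DifferentiableAt ℝ h p) :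
    jacDet (g ∘ h) p = jacDet g (h p) * jacDet h p := by
  have hc : DifferentiableAt ℝ (g ∘ h) p := hg.comp p hh
  rw [jacDet_eq hc, jacDet_eq hg, jacDet_eq hh, fderiv_comp p hg hh]
  simp only [ContinuousLinearMap.comp_apply]
  linear_combination det2_mul (fderiv ℝ g (h p)) (fderiv ℝ h p (1,0)) (fderiv ℝ h p (0,1))

lemma one_zero_mem_bdry : ((1:ℝ),(0:ℝ)) ∈ bdry := by simp [bdry]

lemma one_zero_mem_disk : ((1:ℝ),(0:ℝ)) ∈ disk := by simp [disk]

/-- the pointwise composition of two smooth isotopies in `G_o`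
starting at the identity is again such an isotopy, and
`S((g_t ∘ h_t)) = S((g_t)) + S((h_t))`; i.e. `S` is a homomorphism. -/
theorem S_is_homomorphism
    (G H : ℝ → ℝ × ℝ → ℝ × ℝ) (f k : ℝ → ℝ × ℝ → ℝ)
    (hG : IsIsotopy G) (hGo : ∀ t ∈ Icc (0:ℝ) 1, G t (0, 0) = (0, 0))
    (hf : IsHam G f) (hf0 : ∀ t ∈ Icc (0:ℝ) 1, f t (0, 0) = 0)
    (hH : IsIsotopy H) (hHo : ∀ t ∈ Icc (0:ℝ) 1, H t (0, 0) = (0, 0))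
    (hk : IsHam H k) (hk0 : ∀ t ∈ Icc (0:ℝ) 1, k t (0, 0) = 0) :
    IsIsotopy (fun t => G t ∘ H t) ∧
    (∀ t ∈ Icc (0:ℝ) 1, (G t ∘ H t) (0, 0) = (0, 0)) ∧
    (∀ m : ℝ → ℝ × ℝ → ℝ, IsHam (fun t => G t ∘ H t) m →
      (∀ t ∈ Icc (0:ℝ) 1, m t (0, 0) = 0) →
      (∫ t in (0:ℝ)..1, m t (1, 0)) =
        (∫ t in (0:ℝ)..1, f t (1, 0)) + (∫ t in (0:ℝ)..1, k t (1, 0))) := by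
  obtain ⟨hGsm, hGsymp, hG0⟩ := hG
  obtain ⟨hHsm, hHsymp, hH0⟩ := hH
  refine ⟨⟨?_, ?_, ?_⟩, ?_, ?_⟩
  · -- joint smoothness of the composition
    exact hGsm.comp (contDiff_fst.prodMk hHsm)
  · -- each time slice is a symplectomorphism
    intro t ht
    obtain ⟨hGt, hGmap, hGjac, G', hG'sm, hG'map, hG'l, hG'r⟩ := hGsymp t ht
    obtain ⟨hHt, hHmap, hHjac, H', hH'sm, hH'map, hH'l, hH'r⟩ := hHsymp t ht
    refine ⟨hGt.comp hHt, hGmap.comp hHmap, ?_, H' ∘ G', hH'sm.comp hG'sm,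
      hH'map.comp hG'map, ?_, ?_⟩
    · intro p hp
      have hdH : DifferentiableAt ℝ (H t) p := (hHt.differentiable (by simp)) p
      have hdG : DifferentiableAt ℝ (G t) (H t p) := (hGt.differentiable (by simp)) _
      rw [jacDet_comp hdG hdH, hGjac _ (hHmap hp), hHjac p hp, mul_one]
    · intro p hp
      simp only [Function.comp_apply]
      rw [hG'l _ (hHmap hp), hH'l p hp]
    · intro p hp
      simp only [Function.comp_apply]
      rw [hH'r _ (hG'map hp), hG'r p hp]
  · -- starts at the identity
    intro p hp
    simp only [Function.comp_apply]
    rw [hH0 p hp]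
    exact hG0 p hp
  · -- fixes the origin
    intro t ht
    simp only [Function.comp_apply]
    rw [hHo t ht]
    exact hGo t ht
  · -- the Calabi-type quantity is additive
    intro m hm hm0
    have key : ∀ t ∈ Icc (0:ℝ) 1, m t (1, 0) = f t (1, 0) + k t (1, 0) := by
      intro t ht
      obtain ⟨hGt, hGmap, hGjac, G', hG'sm, hG'map, hG'l, hG'r⟩ := hGsymp t ht
      obtain ⟨hHt, hHmap, hHjac, H', hH'sm, hH'map, hH'l, hH'r⟩ := hHsymp t ht
      have hft : ContDiff ℝ (⊤ : ℕ∞) (f t) := hf.1.comp (contDiff_const.prodMk contDiff_id)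
      have hkt : ContDiff ℝ (⊤ : ℕ∞) (k t) := hk.1.comp (contDiff_const.prodMk contDiff_id)
      have hmt : ContDiff ℝ (⊤ : ℕ∞) (m t) := hm.1.comp (contDiff_const.prodMk contDiff_id)
      -- boundary preservation
      have hHbd : ∀ s ∈ Icc (0:ℝ) 1, ∀ z ∈ bdry, H s z ∈ bdry := by
        intro s hs
        obtain ⟨h1, h2, _, W, hW1, hW2, hW3, hW4⟩ := hHsymp s hs
        exact mapsTo_bdry h1 hW1 h2 hW2 hW3 hW4
      have hH'bd : ∀ z ∈ bdry, H' z ∈ bdry := mapsTo_bdry hH'sm hHt hH'map hHmap hH'r hH'l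
      have hG'bd : ∀ z ∈ bdry, G' z ∈ bdry := mapsTo_bdry hG'sm hGt hG'map hGmap hG'r hG'l
      -- Step A : w has vanishing derivative on the disk
      have hwderiv : ∀ p ∈ disk,
          HasFDerivAt (fun x => m t (G t (H t x)) - f t (G t (H t x)) - k t (H t x))
            (0 : (ℝ × ℝ) →L[ℝ] ℝ) p := by
        intro p hp
        have hq : H t p ∈ disk := hHmap hp
        have hdH : DifferentiableAt ℝ (H t) p := hHt.differentiable (by simp) p
        have hdG : DifferentiableAt ℝ (G t) (H t p) := hGt.differentiable (by simp) _
        have hdm : DifferentiableAt ℝ (m t) (G t (H t p)) := hmt.differentiable (by simp) _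
        have hdf : DifferentiableAt ℝ (f t) (G t (H t p)) := hft.differentiable (by simp) _
        have hdk : DifferentiableAt ℝ (k t) (H t p) := hkt.differentiable (by simp) _
        have hB : HasDerivAt (fun s => H s p)
            (fderiv ℝ (fun z : ℝ × (ℝ × ℝ) => H z.1 z.2) (t, p) (1, 0)) t :=
          hasDerivAt_slice hHsm (hasDerivAt_const t p)
        have hA : HasDerivAt (fun s => G s (H t p))
            (fderiv ℝ (fun z : ℝ × (ℝ × ℝ) => G z.1 z.2) (t, H t p) (1, 0)) t :=
          hasDerivAt_slice hGsm (hasDerivAt_const t (H t p))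
        have hY : HasDerivAt (fun s => G s (H s p))
            (fderiv ℝ (fun z : ℝ × (ℝ × ℝ) => G z.1 z.2) (t, H t p)
              (1, fderiv ℝ (fun z : ℝ × (ℝ × ℝ) => H z.1 z.2) (t, p) (1, 0))) t :=
          hasDerivAt_slice hGsm hB
        have hYval : deriv (fun s => G s (H s p)) t =
            deriv (fun s => G s (H t p)) t +
              fderiv ℝ (G t) (H t p) (fderiv ℝ (fun z : ℝ × (ℝ × ℝ) => H z.1 z.2) (t, p) (1, 0)) := by
          rw [hY.deriv, hA.deriv]
          have h01 : ((1:ℝ), fderiv ℝ (fun z : ℝ × (ℝ × ℝ) => H z.1 z.2) (t, p) (1, 0)) =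
              ((1:ℝ), (0:ℝ × ℝ)) +
                ((0:ℝ), fderiv ℝ (fun z : ℝ × (ℝ × ℝ) => H z.1 z.2) (t, p) (1, 0)) := by simp
          rw [h01, map_add]
          congr 1
          exact (fderiv_slice hGsm t (H t p) _).symm
        have hmx := (hm.2 t ht p hp).1
        have hmy := (hm.2 t ht p hp).2
        simp only [Function.comp] at hmx hmy
        have hfx := (hf.2 t ht (H t p) hq).1
        have hfy := (hf.2 t ht (H t p) hq).2
        have hkx := (hk.2 t ht p hp).1
        have hky := (hk.2 t ht p hp).2
        simp only [pdx, pdy] at hmx hmy hfx hfy hkx hky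
        have hjac : (fderiv ℝ (G t) (H t p) (1, 0)).1 * (fderiv ℝ (G t) (H t p) (0, 1)).2 -
            (fderiv ℝ (G t) (H t p) (0, 1)).1 * (fderiv ℝ (G t) (H t p) (1, 0)).2 = 1 := by
          rw [← jacDet_eq hdG]
          exact hGjac _ hq
        have hΦ : HasFDerivAt (fun x => G t (H t x))
            ((fderiv ℝ (G t) (H t p)).comp (fderiv ℝ (H t) p)) p :=
          hdG.hasFDerivAt.comp p hdH.hasFDerivAt
        have h1 : HasFDerivAt (fun x => m t (G t (H t x)))
            ((fderiv ℝ (m t) (G t (H t p))).comp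
              ((fderiv ℝ (G t) (H t p)).comp (fderiv ℝ (H t) p))) p :=
          hdm.hasFDerivAt.comp p hΦ
        have h2 : HasFDerivAt (fun x => f t (G t (H t x)))
            ((fderiv ℝ (f t) (G t (H t p))).comp
              ((fderiv ℝ (G t) (H t p)).comp (fderiv ℝ (H t) p))) p :=
          hdf.hasFDerivAt.comp p hΦ
        have h3 : HasFDerivAt (fun x => k t (H t x))
            ((fderiv ℝ (k t) (H t p)).comp (fderiv ℝ (H t) p)) p :=
          hdk.hasFDerivAt.comp p hdH.hasFDerivAt
        have hsum := (h1.sub h2).sub h3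
        have hfinal : (fderiv ℝ (m t) (G t (H t p))).comp
              ((fderiv ℝ (G t) (H t p)).comp (fderiv ℝ (H t) p)) -
            (fderiv ℝ (f t) (G t (H t p))).comp
              ((fderiv ℝ (G t) (H t p)).comp (fderiv ℝ (H t) p)) -
            (fderiv ℝ (k t) (H t p)).comp (fderiv ℝ (H t) p) = 0 := by
          apply ContinuousLinearMap.ext
          intro v
          simp only [ContinuousLinearMap.sub_apply, ContinuousLinearMap.comp_apply,
            ContinuousLinearMap.zero_apply]
          rw [clm_apply_scalar (fderiv ℝ (m t) (G t (H t p))),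
            clm_apply_scalar (fderiv ℝ (f t) (G t (H t p))),
            clm_apply_scalar (fderiv ℝ (k t) (H t p)),
            hmx, hmy, hfx, hfy, hkx, hky, hYval, hB.deriv]
          have hdet := det2_mul (fderiv ℝ (G t) (H t p))
            (fderiv ℝ (fun z : ℝ × (ℝ × ℝ) => H z.1 z.2) (t, p) (1, 0))
            (fderiv ℝ (H t) p v)
          simp only [Prod.fst_add, Prod.snd_add]
          linear_combination hdet +
            ((fderiv ℝ (fun z : ℝ × (ℝ × ℝ) => H z.1 z.2) (t, p) (1, 0)).1 *
                (fderiv ℝ (H t) p v).2 -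
              (fderiv ℝ (fun z : ℝ × (ℝ × ℝ) => H z.1 z.2) (t, p) (1, 0)).2 *
                (fderiv ℝ (H t) p v).1) * hjac
        rw [hfinal] at hsum
        exact hsum
      -- Step B : w is constant on the disk
      have hwconst : ∀ x ∈ disk,
          m t (G t (H t x)) - f t (G t (H t x)) - k t (H t x) =
            m t (G t (H t (0, 0))) - f t (G t (H t (0, 0))) - k t (H t (0, 0)) := by
        intro x hx
        have hdiff : ∀ y ∈ disk, DifferentiableAt ℝ
            (fun x => m t (G t (H t x)) - f t (G t (H t x)) - k t (H t x)) y :=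
          fun y hy => (hwderiv y hy).differentiableAt
        have hbound : ∀ y ∈ disk, ‖fderiv ℝ
            (fun x => m t (G t (H t x)) - f t (G t (H t x)) - k t (H t x)) y‖ ≤ 0 := by
          intro y hy
          rw [(hwderiv y hy).fderiv]
          simp
        have hle := convex_disk.norm_image_sub_le_of_norm_fderiv_le hdiff hbound zero_mem_disk hx
        rw [zero_mul] at hle
        have := norm_le_zero_iff.mp hle
        linarith [abs_nonneg (m t (G t (H t x)) - f t (G t (H t x)) - k t (H t x) -
          (m t (G t (H t (0, 0))) - f t (G t (H t (0, 0))) - k t (H t (0, 0)))),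
          sub_eq_zero.mp this]
      -- Step D : k t is constant on the boundary circle
      have hkbd : ∀ x ∈ bdry, k t x = k t (1, 0) := by
        intro x hx
        set c : ℝ → ℝ := fun θ => k t (H t (Real.cos θ, Real.sin θ)) with hc
        have hubd : ∀ θ : ℝ, ((Real.cos θ, Real.sin θ) : ℝ × ℝ) ∈ bdry := by
          intro θ
          show Real.cos θ ^ 2 + Real.sin θ ^ 2 = 1
          rw [add_comm]
          exact Real.sin_sq_add_cos_sq θ
        have hud : ∀ θ : ℝ, ((Real.cos θ, Real.sin θ) : ℝ × ℝ) ∈ disk :=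
          fun θ => bdry_subset_disk (hubd θ)
        -- c is differentiable with zero derivative
        have hcderiv : ∀ θ : ℝ, HasDerivAt c 0 θ := by
          intro θ
          have hu : HasDerivAt (fun θ : ℝ => ((Real.cos θ, Real.sin θ) : ℝ × ℝ))
              (-Real.sin θ, Real.cos θ) θ := (Real.hasDerivAt_cos θ).prodMk (Real.hasDerivAt_sin θ)
          have hdHu : DifferentiableAt ℝ (H t) (Real.cos θ, Real.sin θ) :=
            hHt.differentiable (by simp) _
          have hHu : HasDerivAt (fun θ : ℝ => H t (Real.cos θ, Real.sin θ))
              (fderiv ℝ (H t) (Real.cos θ, Real.sin θ) (-Real.sin θ, Real.cos θ)) θ :=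
            hdHu.hasFDerivAt.comp_hasDerivAt θ hu
          have hdkH : DifferentiableAt ℝ (k t) (H t (Real.cos θ, Real.sin θ)) :=
            hkt.differentiable (by simp) _
          have hcd : HasDerivAt c
              (fderiv ℝ (k t) (H t (Real.cos θ, Real.sin θ))
                (fderiv ℝ (H t) (Real.cos θ, Real.sin θ) (-Real.sin θ, Real.cos θ))) θ :=
            hdkH.hasFDerivAt.comp_hasDerivAt θ hHu
          -- time derivative of H at the circle point
          have hB : HasDerivAt (fun s => H s (Real.cos θ, Real.sin θ))
              (fderiv ℝ (fun z : ℝ × (ℝ × ℝ) => H z.1 z.2) (t, (Real.cos θ, Real.sin θ)) (1, 0)) t :=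
            hasDerivAt_slice hHsm (hasDerivAt_const t _)
          set B := fderiv ℝ (fun z : ℝ × (ℝ × ℝ) => H z.1 z.2) (t, (Real.cos θ, Real.sin θ)) (1, 0)
            with hBdef
          set x0 := H t (Real.cos θ, Real.sin θ) with hx0
          set V := fderiv ℝ (H t) (Real.cos θ, Real.sin θ) (-Real.sin θ, Real.cos θ) with hV
          -- x0 is on the boundary
          have hx0bd : x0.1 ^ 2 + x0.2 ^ 2 = 1 := hHbd t ht _ (hubd θ)
          -- orthogonality 1 : x0 ⟂ B
          have horth1 : x0.1 * B.1 + x0.2 * B.2 = 0 := by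
            have hfst : HasDerivAt (fun s => (H s (Real.cos θ, Real.sin θ)).1) B.1 t :=
              (ContinuousLinearMap.fst ℝ ℝ ℝ).hasFDerivAt.comp_hasDerivAt t hB
            have hsnd : HasDerivAt (fun s => (H s (Real.cos θ, Real.sin θ)).2) B.2 t :=
              (ContinuousLinearMap.snd ℝ ℝ ℝ).hasFDerivAt.comp_hasDerivAt t hB
            have hn : HasDerivAt (fun s => (H s (Real.cos θ, Real.sin θ)).1 ^ 2 +
                (H s (Real.cos θ, Real.sin θ)).2 ^ 2)
                (2 * (H t (Real.cos θ, Real.sin θ)).1 ^ 1 * B.1 +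
                  2 * (H t (Real.cos θ, Real.sin θ)).2 ^ 1 * B.2) t :=
              (hfst.pow 2).add (hsnd.pow 2)
            have h0 : HasDerivWithinAt (fun s => (H s (Real.cos θ, Real.sin θ)).1 ^ 2 +
                (H s (Real.cos θ, Real.sin θ)).2 ^ 2)
                (2 * (H t (Real.cos θ, Real.sin θ)).1 ^ 1 * B.1 +
                  2 * (H t (Real.cos θ, Real.sin θ)).2 ^ 1 * B.2) (Icc 0 1) t :=
              hn.hasDerivWithinAt
            have hval : ∀ s ∈ Icc (0:ℝ) 1, (H s (Real.cos θ, Real.sin θ)).1 ^ 2 +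
                (H s (Real.cos θ, Real.sin θ)).2 ^ 2 = 1 :=
              fun s hs => hHbd s hs _ (hubd θ)
            have hconst : HasDerivWithinAt (fun s => (H s (Real.cos θ, Real.sin θ)).1 ^ 2 +
                (H s (Real.cos θ, Real.sin θ)).2 ^ 2) 0 (Icc 0 1) t :=
              (hasDerivWithinAt_const t (Icc 0 1) (1:ℝ)).congr hval (hval t ht)
            have hzero := (uniqueDiffOn_Icc zero_lt_one t ht).eq_deriv _ h0 hconst
            have hx01 : x0.1 = (H t (Real.cos θ, Real.sin θ)).1 := by rw [hx0]
            have hx02 : x0.2 = (H t (Real.cos θ, Real.sin θ)).2 := by rw [hx0]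
            rw [hx01, hx02]
            nlinarith [hzero]
          -- orthogonality 2 : x0 ⟂ V
          have horth2 : x0.1 * V.1 + x0.2 * V.2 = 0 := by
            have hfst : HasDerivAt (fun θ' : ℝ => (H t (Real.cos θ', Real.sin θ')).1) V.1 θ :=
              (ContinuousLinearMap.fst ℝ ℝ ℝ).hasFDerivAt.comp_hasDerivAt θ hHu
            have hsnd : HasDerivAt (fun θ' : ℝ => (H t (Real.cos θ', Real.sin θ')).2) V.2 θ :=
              (ContinuousLinearMap.snd ℝ ℝ ℝ).hasFDerivAt.comp_hasDerivAt θ hHu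
            have hn : HasDerivAt (fun θ' : ℝ => (H t (Real.cos θ', Real.sin θ')).1 ^ 2 +
                (H t (Real.cos θ', Real.sin θ')).2 ^ 2)
                (2 * (H t (Real.cos θ, Real.sin θ)).1 ^ 1 * V.1 +
                  2 * (H t (Real.cos θ, Real.sin θ)).2 ^ 1 * V.2) θ :=
              (hfst.pow 2).add (hsnd.pow 2)
            have heq : (fun θ' : ℝ => (H t (Real.cos θ', Real.sin θ')).1 ^ 2 +
                (H t (Real.cos θ', Real.sin θ')).2 ^ 2) = fun _ => (1:ℝ) := by
              funext θ'
              exact hHbd t ht _ (hubd θ')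
            rw [heq] at hn
            have hzero := hn.unique (hasDerivAt_const θ (1:ℝ))
            have hx01 : x0.1 = (H t (Real.cos θ, Real.sin θ)).1 := by rw [hx0]
            have hx02 : x0.2 = (H t (Real.cos θ, Real.sin θ)).2 := by rw [hx0]
            rw [hx01, hx02]
            nlinarith [hzero]
          -- conclude the derivative of c vanishes
          have hdet : B.1 * V.2 - B.2 * V.1 = 0 := ortho_det hx0bd horth1 horth2
          have hkxθ := (hk.2 t ht (Real.cos θ, Real.sin θ) (hud θ)).1
          have hkyθ := (hk.2 t ht (Real.cos θ, Real.sin θ) (hud θ)).2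
          simp only [pdx, pdy] at hkxθ hkyθ
          have hval : fderiv ℝ (k t) (H t (Real.cos θ, Real.sin θ)) V = 0 := by
            rw [clm_apply_scalar, hkxθ, hkyθ, hB.deriv]
            linear_combination hdet
          rw [hval] at hcd
          exact hcd
        have hcconst : ∀ θ₁ θ₂ : ℝ, c θ₁ = c θ₂ := by
          intro θ₁ θ₂
          exact is_const_of_deriv_eq_zero (fun θ => (hcderiv θ).differentiableAt)
            (fun θ => (hcderiv θ).deriv) θ₁ θ₂
        -- express x and (1,0) as images of circle points
        have hH'x : H' x ∈ bdry := hH'bd x hx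
        obtain ⟨θ₁, hθ₁c, hθ₁s⟩ := exists_angle hH'x
        have hH'10 : H' (1, 0) ∈ bdry := hH'bd _ one_zero_mem_bdry
        obtain ⟨θ₂, hθ₂c, hθ₂s⟩ := exists_angle hH'10
        have h1 : c θ₁ = k t x := by
          rw [hc]
          simp only
          rw [show ((Real.cos θ₁, Real.sin θ₁) : ℝ × ℝ) = H' x from Prod.ext hθ₁c hθ₁s,
            hH'r x (bdry_subset_disk hx)]
        have h2 : c θ₂ = k t (1, 0) := by
          rw [hc]
          simp only
          rw [show ((Real.cos θ₂, Real.sin θ₂) : ℝ × ℝ) = H' (1, 0) from Prod.ext hθ₂c hθ₂s,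
            hH'r _ one_zero_mem_disk]
        rw [← h1, ← h2]
        exact hcconst θ₁ θ₂
      -- Step C : evaluate the constant
      have h10d : ((1:ℝ), (0:ℝ)) ∈ disk := one_zero_mem_disk
      have hG'10 : G' (1, 0) ∈ disk := hG'map h10d
      have hp0 : H' (G' (1, 0)) ∈ disk := hH'map hG'10
      have hH10 : H t (H' (G' (1, 0))) = G' (1, 0) := hH'r _ hG'10
      have hG10 : G t (G' (1, 0)) = (1, 0) := hG'r _ h10d
      have hwp0 := hwconst _ hp0
      rw [hH10, hG10] at hwp0
      have hO : H t (0, 0) = (0, 0) := hHo t ht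
      have hO2 : G t (0, 0) = (0, 0) := hGo t ht
      rw [hO, hO2, hm0 t ht, hf0 t ht, hk0 t ht] at hwp0
      have hkb : k t (G' (1, 0)) = k t (1, 0) := hkbd _ (hG'bd _ one_zero_mem_bdry)
      rw [hkb] at hwp0
      linarith [hwp0]
    have hfc : Continuous (fun t => f t ((1:ℝ), (0:ℝ))) :=
      hf.1.continuous.comp (continuous_id.prodMk continuous_const)
    have hkc : Continuous (fun t => k t ((1:ℝ), (0:ℝ))) :=
      hk.1.continuous.comp (continuous_id.prodMk continuous_const)
    have hEq : EqOn (fun t => m t ((1:ℝ), (0:ℝ)))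
        (fun t => f t ((1:ℝ), (0:ℝ)) + k t ((1:ℝ), (0:ℝ))) (uIcc (0:ℝ) 1) := by
      intro t ht
      rw [uIcc_of_le (zero_le_one)] at ht
      exact key t ht
    rw [intervalIntegral.integral_congr hEq,
      intervalIntegral.integral_add (hfc.intervalIntegrable 0 1) (hkc.intervalIntegrable 0 1)]
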